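/- arXiv:1103.1768 — 2 statements merged into one kernel-verified Lean document; each statement's English description precedes it below -/
import Mathlib

section
/- Let L and L̃ be m×m real unit lower-triangular matrices that agree in every entry except possibly in the entries of column v strictly below the diagonal (i.e., L_{ij} = L̃_{ij} whenever j ≠ v or i ≤ v). Let D be an m×m diagonal matrix with all D_{ii} > 0 and U an m×m real symmetric matrix. Then for all u, u′ > v: (L⁻¹ U (Lᵀ)⁻¹)_{vv} · ((LDLᵀ)⁻¹)_{uu′} = (L̃⁻¹ U (L̃ᵀ)⁻¹)_{vv} · ((L̃DL̃ᵀ)⁻¹)_{uu′}; that is, this quantity does not depend on the below-diagonal entries of column v. -/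
/-!
Both factors are unchanged separately. Writing `L' = L + E` with `E` supported strictly below
the diagonal in column `v`, the lower-triangularity of `L⁻¹` gives that row `v` of `L⁻¹ * L'`
and column `w` of `L' * L⁻¹`, for `w > v`, are those of the identity. Hence row `v` and the
columns `w > v` of `L⁻¹` and `L'⁻¹` coincide. Since `(A * M * Aᵀ) i j` only depends on the rows
`i, j` of `A`, this settles `(L⁻¹ U L⁻ᵀ)_{vv}` and `(L D Lᵀ)⁻¹_{uu'} = (L⁻ᵀ D⁻¹ L⁻¹)_{uu'}`.
-/

open Matrix

namespace Matrix

variable {n R : Type*} [Fintype n] [CommRing R]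

theorem mul_mul_transpose_apply_congr {A B : Matrix n n R} (M : Matrix n n R) {i j : n}
    (hi : A i = B i) (hj : A j = B j) : (A * M * Aᵀ) i j = (B * M * Bᵀ) i j := by
  simp only [mul_apply, transpose_apply, hi, hj]

variable [DecidableEq n]

theorem row_eq_inv_row_of_mul_row_eq_one {A B : Matrix n n R} {i : n} (hB : IsUnit B.det)
    (h : (A * B) i = (1 : Matrix n n R) i) : A i = B⁻¹ i :=
  calc A i = (A * B * B⁻¹) i := by rw [mul_nonsing_inv_cancel_right _ _ hB]
    _ = (1 * B⁻¹ : Matrix n n R) i := by rw [mul_apply_eq_vecMul, h, ← mul_apply_eq_vecMul]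
    _ = B⁻¹ i := by rw [one_mul]

theorem det_eq_one_of_isLowerTriangular [LinearOrder n] {L : Matrix n n R}
    (hL : L.IsLowerTriangular) (hdiag : ∀ i, L i i = 1) : L.det = 1 := by
  simp [det_of_isLowerTriangular L hL, hdiag]

section ColumnPerturbation

variable [LinearOrder n] {L L' : Matrix n n R} {v : n}

theorem inv_apply_eq_zero_of_isLowerTriangular (hL : L.IsLowerTriangular)
    (hLu : IsUnit L.det) {i j : n} (hij : i < j) : L⁻¹ i j = 0 :=
  letI := L.invertibleOfIsUnitDet hLu
  blockTriangular_inv_of_blockTriangular hL hij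

theorem inv_mul_row_eq_one_of_eq_off_col (hL : L.IsLowerTriangular)
    (hLu : IsUnit L.det) (hagree : ∀ i j, (j ≠ v ∨ i ≤ v) → L i j = L' i j) :
    (L⁻¹ * L') v = (1 : Matrix n n R) v := by
  rw [← nonsing_inv_mul L hLu]
  ext k
  simp only [mul_apply]
  refine Finset.sum_congr rfl fun j _ => ?_
  by_cases hk : k = v
  · rcases le_or_gt j v with hj | hj
    · rw [hagree j k (Or.inr hj)]
    · simp [inv_apply_eq_zero_of_isLowerTriangular hL hLu hj]
  · rw [hagree j k (Or.inl hk)]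

theorem mul_inv_transpose_row_eq_one_of_eq_off_col (hL : L.IsLowerTriangular)
    (hLu : IsUnit L.det) (hagree : ∀ i j, j ≠ v → L i j = L' i j) {w : n} (hw : v < w) :
    (L' * L⁻¹)ᵀ w = (1 : Matrix n n R) w := by
  rw [← transpose_one, ← mul_nonsing_inv L hLu]
  ext k
  simp only [transpose_apply, mul_apply]
  refine Finset.sum_congr rfl fun j _ => ?_
  by_cases hj : j = v
  · subst hj
    simp [inv_apply_eq_zero_of_isLowerTriangular hL hLu hw]
  · rw [hagree k j hj]

theorem inv_row_eq_of_eq_off_col (hL : L.IsLowerTriangular)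
    (hLu : IsUnit L.det) (hL'u : IsUnit L'.det)
    (hagree : ∀ i j, (j ≠ v ∨ i ≤ v) → L i j = L' i j) : L⁻¹ v = L'⁻¹ v :=
  row_eq_inv_row_of_mul_row_eq_one hL'u (inv_mul_row_eq_one_of_eq_off_col hL hLu hagree)

theorem inv_col_eq_of_eq_off_col (hL : L.IsLowerTriangular)
    (hLu : IsUnit L.det) (hL'u : IsUnit L'.det) (hagree : ∀ i j, j ≠ v → L i j = L' i j)
    {w : n} (hw : v < w) : L⁻¹ᵀ w = L'⁻¹ᵀ w := by
  rw [transpose_nonsing_inv L']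
  refine row_eq_inv_row_of_mul_row_eq_one (by rwa [det_transpose]) ?_
  rw [← transpose_mul, mul_inv_transpose_row_eq_one_of_eq_off_col hL hLu hagree hw]

end ColumnPerturbation

end Matrix

theorem stmt_6_general {m : ℕ} (L L' : Matrix (Fin m) (Fin m) ℝ)
    (hlow : ∀ i j : Fin m, i < j → L i j = 0)
    (hdiag : ∀ i : Fin m, L i i = 1)
    (hlow' : ∀ i j : Fin m, i < j → L' i j = 0)
    (hdiag' : ∀ i : Fin m, L' i i = 1)
    (v : Fin m)
    (hagree : ∀ i j : Fin m, (j ≠ v ∨ i ≤ v) → L i j = L' i j)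
    (d : Fin m → ℝ)
    (U : Matrix (Fin m) (Fin m) ℝ)
    (u u' : Fin m) (hu : v < u) (hu' : v < u') :
    (L⁻¹ * U * (Lᵀ)⁻¹) v v * ((L * Matrix.diagonal d * Lᵀ)⁻¹) u u'
      = (L'⁻¹ * U * (L'ᵀ)⁻¹) v v * ((L' * Matrix.diagonal d * L'ᵀ)⁻¹) u u' := by
  have hL : L.IsLowerTriangular := fun i j h => hlow i j h
  have hLu : IsUnit L.det := by simp [det_eq_one_of_isLowerTriangular hL hdiag]
  have hL'u : IsUnit L'.det := by
    simp [det_eq_one_of_isLowerTriangular (fun i j h => hlow' i j h) hdiag']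
  have hrow := inv_row_eq_of_eq_off_col hL hLu hL'u hagree
  have hcol {w} (hw : v < w) :=
    inv_col_eq_of_eq_off_col hL hLu hL'u (fun i j hj => hagree i j (Or.inl hj)) hw
  have hLDL (K : Matrix (Fin m) (Fin m) ℝ) :
      (K * diagonal d * Kᵀ)⁻¹ = K⁻¹ᵀ * (diagonal d)⁻¹ * K⁻¹ᵀᵀ := by
    rw [Matrix.mul_inv_rev, Matrix.mul_inv_rev, transpose_transpose, transpose_nonsing_inv,
      mul_assoc]
  rw [← transpose_nonsing_inv L, ← transpose_nonsing_inv L', hLDL L, hLDL L',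
    mul_mul_transpose_apply_congr U hrow hrow,
    mul_mul_transpose_apply_congr _ (hcol hu) (hcol hu')]

/-- if the unit lower-triangular matrices `L` and `L'` agree in every entry
except possibly the below-diagonal entries of column `v`, then for all `u, u' > v` the
quantity `(L⁻¹ U (Lᵀ)⁻¹)_{vv} ((LDLᵀ)⁻¹)_{uu'}` is unchanged when `L` is replaced by `L'`. -/
theorem stmt_6 {m : ℕ} (hm : 0 < m) (L L' : Matrix (Fin m) (Fin m) ℝ)
    (hlow : ∀ i j : Fin m, i < j → L i j = 0)
    (hdiag : ∀ i : Fin m, L i i = 1)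
    (hlow' : ∀ i j : Fin m, i < j → L' i j = 0)
    (hdiag' : ∀ i : Fin m, L' i i = 1)
    (v : Fin m)
    (hagree : ∀ i j : Fin m, (j ≠ v ∨ i ≤ v) → L i j = L' i j)
    (d : Fin m → ℝ) (hd : ∀ i, 0 < d i)
    (U : Matrix (Fin m) (Fin m) ℝ) (hUsymm : U.IsSymm)
    (u u' : Fin m) (hu : v < u) (hu' : v < u') :
    (L⁻¹ * U * (Lᵀ)⁻¹) v v * ((L * Matrix.diagonal d * Lᵀ)⁻¹) u u'
      = (L'⁻¹ * U * (L'ᵀ)⁻¹) v v * ((L' * Matrix.diagonal d * L'ᵀ)⁻¹) u u' :=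
  stmt_6_general L L' hlow hdiag hlow' hdiag' v hagree d U u u' hu hu'
end

section
/- Suppose that L⁻¹ ∈ 𝓛_G for every L ∈ 𝓛_G, that U is an m×m real symmetric positive definite matrix, and that α ∈ ℝ^m satisfies α_i > |N^≺(i)| + 2 for all i, so that z_G(U,α) := ∫_{Θ_G} π̃_{U,α}(L,D) dL dD < ∞; let P_{U,α} be the probability measure on the coordinate space ℝ^{E^≺} × (0,∞)^m (identified with Θ_G) with density π̃_{U,α}/z_G(U,α) with respect to Lebesgue measure. Then for every i, the random variables (L,D) ↦ D_{ii} and (L,D) ↦ ((LDLᵀ)_{kl})_{1≤k,l≤i−1} are independent under P_{U,α}. -/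
open Matrix MeasureTheory

/-- The unit lower-triangular matrix in `𝓛_G` whose free entries (the entries `(i,j)` with
`(i,j) ∈ E` and `j < i`) are given by `x`; all other off-diagonal entries are `0`. -/
noncomputable def lowerOfCoords {m : ℕ} (E : Finset (Fin m × Fin m))
    (x : {p : Fin m × Fin m // p ∈ E ∧ p.2 < p.1} → ℝ) :
    Matrix (Fin m) (Fin m) ℝ :=
  Matrix.of fun i j =>
    if i = j then 1
    else if h : (i, j) ∈ E ∧ j < i then x ⟨(i, j), h⟩ else 0

/-- The unnormalized density `π̃_{U,α}` as a function of the free coordinates, extended by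
`0` off the positive orthant for the diagonal coordinates. -/
noncomputable def covKernel {m : ℕ} (E : Finset (Fin m × Fin m))
    (U : Matrix (Fin m) (Fin m) ℝ) (α : Fin m → ℝ)
    (p : ({q : Fin m × Fin m // q ∈ E ∧ q.2 < q.1} → ℝ) × (Fin m → ℝ)) : ℝ :=
  if ∀ i, 0 < p.2 i then
    Real.exp (-(Matrix.trace
        ((lowerOfCoords E p.1 * Matrix.diagonal p.2 * (lowerOfCoords E p.1)ᵀ)⁻¹ * U) +
      ∑ i : Fin m, α i * Real.log (p.2 i)) / 2)
  else 0

/-- The probability measure `P_{U,α}` on the coordinate space `ℝ^{E^≺} × ℝ^m` (identified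
with `Θ_G`) with density `π̃_{U,α} / z_G(U,α)` with respect to Lebesgue measure. -/
noncomputable def covPrior {m : ℕ} (E : Finset (Fin m × Fin m))
    (U : Matrix (Fin m) (Fin m) ℝ) (α : Fin m → ℝ) :
    Measure (({q : Fin m × Fin m // q ∈ E ∧ q.2 < q.1} → ℝ) × (Fin m → ℝ)) :=
  MeasureTheory.volume.withDensity fun p =>
    ENNReal.ofReal (covKernel E U α p /
      (∫⁻ q, ENNReal.ofReal (covKernel E U α q)).toReal)

open ProbabilityTheory ENNReal

/-!
Pass from the coordinates of `L` to those of `A = L⁻¹`, which lies in `𝓛_G` again. This change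
of variables preserves Lebesgue measure, because each entry `A_{kl}` is `-L_{kl}` plus a
polynomial in entries of `L` of smaller gap `k - l`. In the new coordinates
`tr ((LDLᵀ)⁻¹U) = tr (Aᵀ D⁻¹ A U) = ∑ⱼ D_jj⁻¹ (A U Aᵀ)_jj`, so the density is a product over the
vertices `j` of factors depending only on row `j` of `A` and on `D_jj`. Splitting the coordinates
into those of the vertices `< i` and `≥ i` therefore exhibits `P_{U,α}` as the image of a product
measure. `D_ii` is a function of the second block, and the leading block of `LDLᵀ = A⁻¹ D A⁻ᵀ` a
function of the first, since the rows `< i` of `A⁻¹` only involve the rows `< i` of `A`.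
-/

namespace Matrix

variable {n R : Type*} [Fintype n] [DecidableEq n] [LinearOrder n] [CommRing R]

theorem IsLowerTriangular.det_eq_one {L : Matrix n n R} (hL : L.IsLowerTriangular)
    (hL1 : ∀ i, L i i = 1) : L.det = 1 := by
  simp [det_of_isLowerTriangular L hL, hL1]

theorem IsLowerTriangular.inv {L : Matrix n n R} (hL : L.IsLowerTriangular)
    (hL1 : ∀ i, L i i = 1) : L⁻¹.IsLowerTriangular := by
  have := L.invertibleOfIsUnitDet (by simp [hL.det_eq_one hL1])
  exact blockTriangular_inv_of_blockTriangular hL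

theorem IsLowerTriangular.inv_apply_self {L : Matrix n n R} (hL : L.IsLowerTriangular)
    (hL1 : ∀ i, L i i = 1) (i : n) : L⁻¹ i i = 1 := by
  have h := congr_fun₂ (nonsing_inv_mul L (by simp [hL.det_eq_one hL1])) i i
  rwa [mul_apply, Finset.sum_eq_single i, hL1, mul_one, one_apply_eq] at h
  · intro c _ hc
    rcases hc.lt_or_gt with hc | hc
    · rw [hL (show OrderDual.toDual i < OrderDual.toDual c from hc), mul_zero]
    · rw [hL.inv hL1 (show OrderDual.toDual c < OrderDual.toDual i from hc), zero_mul]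
  · simp

omit [LinearOrder n] in
theorem inv_sub_inv_eq {L M : Matrix n n R} (hL : IsUnit L.det) (hM : IsUnit M.det) :
    M⁻¹ - L⁻¹ = L⁻¹ * (L - M) * M⁻¹ := by
  rw [Matrix.mul_sub, Matrix.sub_mul, nonsing_inv_mul L hL, Matrix.mul_assoc,
    mul_nonsing_inv M hM, Matrix.one_mul, Matrix.mul_one]

theorem inv_apply_eq_of_forall_row_eq {L M : Matrix n n R} (hL : IsUnit L.det)
    (hM : IsUnit M.det) (hLi : L⁻¹.IsLowerTriangular) {k : n}
    (hLM : ∀ a ≤ k, ∀ b, L a b = M a b) (l : n) : L⁻¹ k l = M⁻¹ k l := by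
  have hrow : ∀ b, (L⁻¹ * (L - M)) k b = 0 := fun b => by
    refine Finset.sum_eq_zero fun a _ => ?_
    change L⁻¹ k a * (L - M) a b = 0
    rcases le_or_gt a k with ha | ha
    · rw [sub_apply, hLM a ha b, sub_self, mul_zero]
    · rw [hLi (show OrderDual.toDual a < OrderDual.toDual k from ha), zero_mul]
  have h := congr_fun₂ (inv_sub_inv_eq hL hM) k l
  rw [sub_apply, mul_apply] at h
  simp only [hrow, zero_mul, Finset.sum_const_zero] at h
  exact (sub_eq_zero.mp h).symm

/-- Only the entry `(i, j)` of `L - M` contributes to `(M⁻¹ - L⁻¹) i j = (L⁻¹ (L - M) M⁻¹) i j`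
once `L` and `M` agree on the rest of the box `j ≤ b ≤ a ≤ i`. -/
theorem IsLowerTriangular.inv_add_apply_eq {L M : Matrix n n R} (hL : L.IsLowerTriangular)
    (hL1 : ∀ i, L i i = 1) (hM : M.IsLowerTriangular) (hM1 : ∀ i, M i i = 1) {i j : n}
    (hLM : ∀ a b, a ≤ i → j ≤ b → (a, b) ≠ (i, j) → L a b = M a b) :
    L⁻¹ i j + L i j = M⁻¹ i j + M i j := by
  have h := congr_fun₂ (inv_sub_inv_eq (L := L) (M := M) (by simp [hL.det_eq_one hL1])
    (by simp [hM.det_eq_one hM1])) i j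
  have hterm : ∀ a b, (a, b) ≠ (i, j) → L⁻¹ i a * (L - M) a b * M⁻¹ b j = 0 := by
    intro a b hab
    by_cases ha : i < a
    · rw [hL.inv hL1 (show OrderDual.toDual a < OrderDual.toDual i from ha), zero_mul, zero_mul]
    by_cases hb : b < j
    · rw [hM.inv hM1 (show OrderDual.toDual j < OrderDual.toDual b from hb), mul_zero]
    rw [sub_apply, hLM a b (not_lt.mp ha) (not_lt.mp hb) hab, sub_self, mul_zero, zero_mul]
  rw [sub_apply, mul_apply, Finset.sum_eq_single j, mul_apply, Finset.sum_eq_single i,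
    hL.inv_apply_self hL1, hM.inv_apply_self hM1, sub_apply] at h
  · linear_combination -h
  · intro a _ ha
    simpa [hM.inv_apply_self hM1] using hterm a j (by simp [ha])
  · simp
  · intro b _ hb
    rw [mul_apply, Finset.sum_mul]
    exact Finset.sum_eq_zero fun a _ => hterm a b (by simp [hb])
  · simp

end Matrix

section Shear

variable {ι : Type*} [Fintype ι]

/-- Splitting the coordinates into `Sᶜ` and `S`, this map is a skew product whose fibre maps are
translations. -/
theorem measurePreserving_add_of_dependsOn_of_eq_zero (S : Set ι) [DecidablePred (· ∈ S)]
    {h : (ι → ℝ) → ι → ℝ} (hm : Measurable h) (hdep : DependsOn h Sᶜ)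
    (hS : ∀ x, ∀ k ∉ S, h x k = 0) :
    MeasurePreserving (fun x => x + h x) volume volume := by
  let e := MeasurableEquiv.piEquivPiSubtypeProd (fun _ : ι => ℝ) (· ∉ S)
  have he : MeasurePreserving e volume volume := volume_preserving_piEquivPiSubtypeProd _ _
  let c : ({k // k ∉ S} → ℝ) → {k // ¬ k ∉ S} → ℝ := fun u k => h (e.symm (u, 0)) k
  have hc : Measurable c := measurable_pi_lambda _ fun k =>
    (hm.comp (e.symm.measurable.comp (measurable_id.prodMk measurable_const))).eval
  have hskew : MeasurePreserving (fun z : ({k // k ∉ S} → ℝ) × ({k // ¬ k ∉ S} → ℝ) =>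
      (id z.1, z.2 + c z.1)) (volume.prod volume) (volume.prod volume) :=
    (MeasurePreserving.id volume).skew_product (measurable_snd.add (hc.comp measurable_fst))
      (ae_of_all _ fun u => (measurePreserving_add_right volume (c u)).map_eq)
  have hfac : (fun x => x + h x) = e.symm ∘ (fun z => (id z.1, z.2 + c z.1)) ∘ e := by
    funext x k
    by_cases hk : k ∈ S
    · have : h x = h (e.symm (fun k => x k, 0)) := hdep fun k hk => by simp_all [e]
      simp [e, c, hk, this]
    · simp [e, hk, hS x k hk]
  rw [hfac]
  exact he.symm.comp (hskew.comp he)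

theorem measurePreserving_add_of_dependsOn_lt (r : ι → ℕ) {f : (ι → ℝ) → ι → ℝ}
    (hf : Measurable f) (hdep : ∀ k, DependsOn (f · k) {j | r j < r k}) :
    MeasurePreserving (fun x => x + f x) volume volume := by
  let fBelow : ℕ → (ι → ℝ) → ι → ℝ := fun R x k => if r k < R then f x k else 0
  -- adding the rank-`R` layer after the lower layers is a translation along that layer
  have hstep : ∀ R, MeasurePreserving (fun x => x + fBelow R x) volume volume := by
    intro R
    induction R with
    | zero =>
      convert MeasurePreserving.id (volume : Measure (ι → ℝ)) using 1
      funext x k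
      simp [fBelow]
    | succ R ih =>
      let layer : (ι → ℝ) → ι → ℝ := fun x k => if r k = R then f x k else 0
      have hlayer : MeasurePreserving (fun x => x + layer x) volume volume := by
        refine measurePreserving_add_of_dependsOn_of_eq_zero {k | r k = R}
          (measurable_pi_lambda _ fun k => ?_) (fun x y hxy => ?_) fun x k hk => if_neg hk
        · by_cases hk : r k = R
          · simpa [layer, hk] using hf.eval
          · simp [layer, hk]
        · funext k
          by_cases hk : r k = R
          · simp only [layer, hk, if_true]
            exact hdep k fun j hj => hxy j (by simp_all; omega)
          · simp [layer, hk]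
      have hfac : (fun x => x + fBelow (R + 1) x)
          = (fun x => x + fBelow R x) ∘ (fun x => x + layer x) := by
        funext x k
        have hlow : ∀ j, r j < R → (x + layer x) j = x j := fun j hj => by
          simp [layer, hj.ne]
        rcases lt_trichotomy (r k) R with hk | hk | hk
        · simp only [Function.comp_apply, Pi.add_apply, fBelow, hk, if_true, hlow k hk,
            show r k < R + 1 by omega]
          exact congrArg _ (hdep k fun j hj => hlow j (lt_trans hj hk)).symm
        · simp [fBelow, layer, hk]
        · simp [fBelow, layer, hk.ne', show ¬ r k < R by omega, show ¬ r k ≤ R by omega]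
      rw [hfac]
      exact ih.comp hlayer
  obtain ⟨R, hR⟩ : ∃ R, ∀ k, r k < R :=
    ⟨Finset.univ.sup r + 1, fun k => Nat.lt_succ_of_le (Finset.le_sup (Finset.mem_univ k))⟩
  simpa [fBelow, hR] using hstep R

end Shear

section Independence

variable {Ω X Y β γ : Type*} [MeasurableSpace Ω] [MeasurableSpace X] [MeasurableSpace Y]
  [MeasurableSpace β] [MeasurableSpace γ] {f : Ω → β} {g : Ω → γ}

theorem indepFun_inv_measure_univ_smul {ν : Measure Ω}
    (h : ∀ A B, MeasurableSet A → MeasurableSet B →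
      ν (f ⁻¹' A ∩ g ⁻¹' B) * ν Set.univ = ν (f ⁻¹' A) * ν (g ⁻¹' B)) :
    IndepFun f g ((ν Set.univ)⁻¹ • ν) := by
  rw [indepFun_iff_measure_inter_preimage_eq_mul]
  intro A B hA hB
  by_cases h0 : ν Set.univ = 0
  · simp [Measure.measure_univ_eq_zero.mp h0]
  by_cases htop : ν Set.univ = ∞
  · simp [htop]
  have hc : (ν Set.univ)⁻¹ * ν Set.univ = 1 := ENNReal.inv_mul_cancel h0 htop
  simp only [Measure.smul_apply, smul_eq_mul]
  calc (ν Set.univ)⁻¹ * ν (f ⁻¹' A ∩ g ⁻¹' B)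
      = (ν Set.univ)⁻¹ * ((ν Set.univ)⁻¹ * ν Set.univ) * ν (f ⁻¹' A ∩ g ⁻¹' B) := by
        rw [hc, mul_one]
    _ = (ν Set.univ)⁻¹ * ((ν Set.univ)⁻¹ * (ν (f ⁻¹' A ∩ g ⁻¹' B) * ν Set.univ)) := by ring
    _ = _ := by rw [h A B hA hB]; ring

variable {μ : Measure Ω} {μX : Measure X} {μY : Measure Y} [SFinite μY] (Φ : X × Y ≃ᵐ Ω)
  {κ : Ω → ℝ≥0∞} {p : X → ℝ≥0∞} {q : Y → ℝ≥0∞} {f' : X → β} {g' : Y → γ}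

theorem withDensity_preimage_inter_preimage_eq_mul (hΦ : MeasurePreserving Φ (μX.prod μY) μ)
    (hp : Measurable p) (hq : Measurable q) (hκ : ∀ z, κ (Φ z) = p z.1 * q z.2)
    (hf' : Measurable f') (hg' : Measurable g') (hf : ∀ z, f (Φ z) = f' z.1)
    (hg : ∀ z, g (Φ z) = g' z.2) {A : Set β} {B : Set γ} (hA : MeasurableSet A)
    (hB : MeasurableSet B) :
    μ.withDensity κ (f ⁻¹' A ∩ g ⁻¹' B)
      = μX.withDensity p (f' ⁻¹' A) * μY.withDensity q (g' ⁻¹' B) := by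
  have hpre : Φ ⁻¹' (f ⁻¹' A ∩ g ⁻¹' B) = (f' ⁻¹' A) ×ˢ (g' ⁻¹' B) := by
    ext z
    simp [hf, hg]
  have hS : MeasurableSet (f ⁻¹' A ∩ g ⁻¹' B) :=
    Φ.measurableSet_preimage.mp (hpre ▸ (hf' hA).prod (hg' hB))
  rw [withDensity_apply _ hS, withDensity_apply _ (hf' hA), withDensity_apply _ (hg' hB),
    ← lintegral_indicator hS, ← lintegral_indicator (hf' hA), ← lintegral_indicator (hg' hB),
    ← hΦ.lintegral_comp_emb Φ.measurableEmbedding,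
    ← lintegral_prod_mul ((hp.indicator (hf' hA)).aemeasurable)
      ((hq.indicator (hg' hB)).aemeasurable)]
  refine lintegral_congr fun z => ?_
  by_cases hzA : f' z.1 ∈ A <;> by_cases hzB : g' z.2 ∈ B <;>
    simp [Set.indicator, hf, hg, hκ, hzA, hzB]

theorem indepFun_withDensity_of_measurePreserving_prod
    (hΦ : MeasurePreserving Φ (μX.prod μY) μ)
    (hp : Measurable p) (hq : Measurable q) (hκ : ∀ z, κ (Φ z) = p z.1 * q z.2)
    (hf' : Measurable f') (hg' : Measurable g') (hf : ∀ z, f (Φ z) = f' z.1)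
    (hg : ∀ z, g (Φ z) = g' z.2) :
    IndepFun f g ((μ.withDensity κ Set.univ)⁻¹ • μ.withDensity κ) := by
  have key : ∀ {A : Set β} {B : Set γ}, MeasurableSet A → MeasurableSet B →
      μ.withDensity κ (f ⁻¹' A ∩ g ⁻¹' B)
        = μX.withDensity p (f' ⁻¹' A) * μY.withDensity q (g' ⁻¹' B) :=
    withDensity_preimage_inter_preimage_eq_mul Φ hΦ hp hq hκ hf' hg' hf hg
  refine indepFun_inv_measure_univ_smul fun A B hA hB => ?_
  have hA' := key hA MeasurableSet.univ
  have hB' := key MeasurableSet.univ hB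
  have huniv := key (MeasurableSet.univ (α := β)) (MeasurableSet.univ (α := γ))
  simp only [Set.preimage_univ, Set.inter_univ, Set.univ_inter] at hA' hB' huniv
  rw [key hA hB, hA', hB', huniv]
  ring

end Independence

section Normalization

variable {m : ℕ} (E : Finset (Fin m × Fin m)) (U : Matrix (Fin m) (Fin m) ℝ) (α : Fin m → ℝ)

/-- `covPrior` is the normalization of `volume.withDensity π̃`, also when `z_G` is `0` or `∞`
(then both sides are the zero measure). -/
theorem covPrior_eq_smul :
    covPrior E U α = (volume.withDensity (fun p => ENNReal.ofReal (covKernel E U α p)) Set.univ)⁻¹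
      • volume.withDensity (fun p => ENNReal.ofReal (covKernel E U α p)) := by
  rw [withDensity_apply _ MeasurableSet.univ, Measure.restrict_univ]
  unfold covPrior
  set Z := ∫⁻ p, ENNReal.ofReal (covKernel E U α p)
  by_cases h0 : Z = 0
  · have hν : volume.withDensity (fun p => ENNReal.ofReal (covKernel E U α p)) = 0 :=
      Measure.measure_univ_eq_zero.mp (by rwa [withDensity_apply _ MeasurableSet.univ,
        Measure.restrict_univ])
    simp [h0, hν]
  by_cases htop : Z = ∞
  · simp [Z, htop]
  have hdens : (fun p => ENNReal.ofReal (covKernel E U α p / Z.toReal))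
      = Z⁻¹ • fun p => ENNReal.ofReal (covKernel E U α p) := by
    funext p
    rw [ENNReal.ofReal_div_of_pos (ENNReal.toReal_pos h0 htop), ENNReal.ofReal_toReal htop,
      div_eq_mul_inv, mul_comm, Pi.smul_apply, smul_eq_mul]
  rw [hdens, withDensity_smul' _ _ (ENNReal.inv_ne_top.mpr h0)]

end Normalization

section Coordinates

variable {m : ℕ} (E : Finset (Fin m × Fin m))

abbrev LowerEdge := {q : Fin m × Fin m // q ∈ E ∧ q.2 < q.1}

variable {E}

theorem lowerOfCoords_isLowerTriangular (x : LowerEdge E → ℝ) :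
    (lowerOfCoords E x).IsLowerTriangular := fun i j (hij : j > i) => by
  simp [lowerOfCoords, hij.ne, hij.not_gt]

@[simp]
theorem lowerOfCoords_apply_self (x : LowerEdge E → ℝ) (i : Fin m) :
    lowerOfCoords E x i i = 1 := by
  simp [lowerOfCoords]

theorem lowerOfCoords_apply_lowerEdge (x : LowerEdge E → ℝ) (q : LowerEdge E) :
    lowerOfCoords E x q.1.1 q.1.2 = x q := by
  simp [lowerOfCoords, q.2.2.ne', q.2]

theorem lowerOfCoords_apply_congr {x y : LowerEdge E → ℝ} {a b : Fin m}
    (h : ∀ q : LowerEdge E, q.1 = (a, b) → x q = y q) :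
    lowerOfCoords E x a b = lowerOfCoords E y a b := by
  simp only [lowerOfCoords, of_apply]
  split_ifs with hab hE
  · rfl
  · exact h _ rfl
  · rfl

theorem continuous_lowerOfCoords : Continuous (lowerOfCoords E) :=
  continuous_matrix fun i j => by
    simp only [lowerOfCoords, of_apply]
    split_ifs
    exacts [continuous_const, continuous_apply _, continuous_const]

variable (E) in
def InvClosed : Prop :=
  ∀ L : Matrix (Fin m) (Fin m) ℝ,
      (∀ i j : Fin m, i < j → L i j = 0) →
      (∀ i : Fin m, L i i = 1) →
      (∀ i j : Fin m, j < i → (i, j) ∉ E → L i j = 0) →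
      (∀ i j : Fin m, j < i → (i, j) ∉ E → L⁻¹ i j = 0)

variable (E) in
noncomputable def invCoords (x : LowerEdge E → ℝ) : LowerEdge E → ℝ :=
  fun q => (lowerOfCoords E x)⁻¹ q.1.1 q.1.2

theorem lowerOfCoords_invCoords (hE : InvClosed E) (x : LowerEdge E → ℝ) :
    lowerOfCoords E (invCoords E x) = (lowerOfCoords E x)⁻¹ := by
  have hL := lowerOfCoords_isLowerTriangular x
  have hL1 := lowerOfCoords_apply_self x
  ext i j
  rcases lt_trichotomy i j with h | rfl | h
  · rw [lowerOfCoords_isLowerTriangular _ h, hL.inv hL1 h]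
  · rw [lowerOfCoords_apply_self, hL.inv_apply_self hL1]
  · by_cases he : (i, j) ∈ E
    · exact lowerOfCoords_apply_lowerEdge _ ⟨(i, j), he, h⟩
    · have hnon : ∀ y : LowerEdge E → ℝ, lowerOfCoords E y i j = 0 := fun y => by
        simp [lowerOfCoords, h.ne', he]
      rw [hnon, hE _ (fun _ _ hab => hL hab) hL1 (fun a b hba hab => by
        simp [lowerOfCoords, hab, hba.ne']) i j h he]

end Coordinates

section InverseCoordinates

variable {m : ℕ} {E : Finset (Fin m × Fin m)}

theorem invCoords_invCoords (hE : InvClosed E) (x : LowerEdge E → ℝ) :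
    invCoords E (invCoords E x) = x := by
  funext q
  have hdet := (lowerOfCoords_isLowerTriangular x).det_eq_one (lowerOfCoords_apply_self x)
  rw [invCoords, lowerOfCoords_invCoords hE, nonsing_inv_nonsing_inv _ (by simp [hdet]),
    lowerOfCoords_apply_lowerEdge]

theorem continuous_invCoords : Continuous (invCoords E) := by
  have h : (fun x => (lowerOfCoords E x)⁻¹) = fun x => (lowerOfCoords E x).adjugate := by
    funext x
    rw [inv_def, (lowerOfCoords_isLowerTriangular x).det_eq_one (lowerOfCoords_apply_self x),
      Ring.inverse_one, one_smul]
  have hinv : Continuous fun x => (lowerOfCoords E x)⁻¹ :=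
    h ▸ continuous_lowerOfCoords.matrix_adjugate
  exact continuous_pi fun q => (continuous_apply q.1.2).comp ((continuous_apply q.1.1).comp hinv)

theorem dependsOn_invCoords_add (q : LowerEdge E) :
    DependsOn (fun x => invCoords E x q + x q)
      {q' : LowerEdge E | (q'.1.1 : ℕ) - q'.1.2 < (q.1.1 : ℕ) - q.1.2} := by
  intro x y h
  simp only [invCoords, ← lowerOfCoords_apply_lowerEdge _ q]
  refine (lowerOfCoords_isLowerTriangular x).inv_add_apply_eq (lowerOfCoords_apply_self x)
    (lowerOfCoords_isLowerTriangular y) (lowerOfCoords_apply_self y) fun a b ha hb hab => ?_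
  refine lowerOfCoords_apply_congr fun q' hq' => h q' ?_
  have ha' : (q'.1.1 : ℕ) ≤ q.1.1 := by rw [hq']; exact ha
  have hb' : (q.1.2 : ℕ) ≤ q'.1.2 := by rw [hq']; exact hb
  have hne : (q'.1.1 : ℕ) ≠ q.1.1 ∨ (q'.1.2 : ℕ) ≠ q.1.2 := by
    by_contra! hc
    exact hab (hq' ▸ Prod.ext (Fin.ext hc.1) (Fin.ext hc.2))
  have hq'lt : (q'.1.2 : ℕ) < q'.1.1 := q'.2.2
  have hqlt : (q.1.2 : ℕ) < q.1.1 := q.2.2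
  change (q'.1.1 : ℕ) - q'.1.2 < (q.1.1 : ℕ) - q.1.2
  omega

theorem measurePreserving_invCoords : MeasurePreserving (invCoords E) volume volume := by
  have hshear := measurePreserving_add_of_dependsOn_lt
    (fun q : LowerEdge E => (q.1.1 : ℕ) - q.1.2) (f := fun y => invCoords E (-y) - y)
    (continuous_invCoords.comp continuous_neg |>.sub continuous_id).measurable
    fun q x y hxy => by
      have := dependsOn_invCoords_add q (x := -x) (y := -y) fun q' hq' => by simp [hxy q' hq']
      simp only [Pi.sub_apply, Pi.neg_apply] at this ⊢
      linarith
  convert hshear.comp (Measure.measurePreserving_neg volume) using 1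
  funext x
  simp

theorem inv_lowerOfCoords_apply_congr {x x' : LowerEdge E → ℝ} {k : Fin m}
    (h : ∀ q : LowerEdge E, q.1.1 ≤ k → x q = x' q) (c : Fin m) :
    (lowerOfCoords E x)⁻¹ k c = (lowerOfCoords E x')⁻¹ k c := by
  have hL := lowerOfCoords_isLowerTriangular x
  have hL1 := lowerOfCoords_apply_self x
  refine inv_apply_eq_of_forall_row_eq (by simp [hL.det_eq_one hL1])
    (by simp [(lowerOfCoords_isLowerTriangular x').det_eq_one (lowerOfCoords_apply_self x')])
    (hL.inv hL1) (fun a ha b => lowerOfCoords_apply_congr fun q hq => h q ?_) c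
  rw [hq]
  exact ha

variable (E) in
noncomputable def invCoordsEquiv (hE : InvClosed E) :
    (LowerEdge E → ℝ) ≃ᵐ (LowerEdge E → ℝ) where
  toFun := invCoords E
  invFun := invCoords E
  left_inv := invCoords_invCoords hE
  right_inv := invCoords_invCoords hE
  measurable_toFun := continuous_invCoords.measurable
  measurable_invFun := continuous_invCoords.measurable

end InverseCoordinates

section Kernel

variable {m : ℕ} {E : Finset (Fin m × Fin m)} (U : Matrix (Fin m) (Fin m) ℝ) (α : Fin m → ℝ)

variable (E) in
noncomputable def covKernelFactor (j : Fin m) (x : LowerEdge E → ℝ) (t : ℝ) : ℝ :=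
  if 0 < t then
    Real.exp (-(t⁻¹ * (lowerOfCoords E x * U * (lowerOfCoords E x)ᵀ) j j + α j * Real.log t) / 2)
  else 0

theorem covKernelFactor_nonneg (j : Fin m) (x : LowerEdge E → ℝ) (t : ℝ) :
    0 ≤ covKernelFactor E U α j x t := by
  unfold covKernelFactor
  split_ifs
  exacts [(Real.exp_pos _).le, le_rfl]

theorem covKernel_invCoords (hE : InvClosed E) (x : LowerEdge E → ℝ) (d : Fin m → ℝ) :
    covKernel E U α (invCoords E x, d) = ∏ j, covKernelFactor E U α j x (d j) := by
  unfold covKernel covKernelFactor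
  rw [lowerOfCoords_invCoords hE]
  by_cases hd : ∀ j, 0 < d j
  · set A := lowerOfCoords E x
    have hdet : IsUnit A.det := by
      simp [A, (lowerOfCoords_isLowerTriangular x).det_eq_one (lowerOfCoords_apply_self x)]
    have hdiag : (diagonal d)⁻¹ = diagonal d⁻¹ := inv_eq_left_inv <| by
      rw [diagonal_mul_diagonal, ← diagonal_one]
      exact congrArg diagonal (funext fun j => inv_mul_cancel₀ (hd j).ne')
    have hinv : (A⁻¹ * diagonal d * A⁻¹ᵀ)⁻¹ = Aᵀ * (diagonal d⁻¹ * A) := by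
      rw [transpose_nonsing_inv, Matrix.mul_inv_rev, Matrix.mul_inv_rev,
        nonsing_inv_nonsing_inv _ hdet, nonsing_inv_nonsing_inv _ (by rwa [det_transpose]), hdiag]
    have htrace : trace (Aᵀ * (diagonal d⁻¹ * A) * U) = ∑ j, (d j)⁻¹ * (A * U * Aᵀ) j j := by
      rw [Matrix.mul_assoc, trace_mul_comm, trace]
      simp only [diag, Matrix.mul_assoc, diagonal_mul, Pi.inv_apply]
    rw [if_pos hd, hinv, htrace, Finset.prod_congr rfl fun j _ => if_pos (hd j), ← Real.exp_sum]
    congr 1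
    rw [← Finset.sum_div, Finset.sum_neg_distrib, Finset.sum_add_distrib]
  · obtain ⟨j, hj⟩ := not_forall.mp hd
    rw [if_neg hd, Finset.prod_eq_zero (Finset.mem_univ j) (if_neg hj)]

theorem covKernelFactor_congr {j : Fin m} {x y : LowerEdge E → ℝ}
    (h : ∀ q : LowerEdge E, q.1.1 = j → x q = y q) (t : ℝ) :
    covKernelFactor E U α j x t = covKernelFactor E U α j y t := by
  have hrow : ∀ b, lowerOfCoords E x j b = lowerOfCoords E y j b := fun b =>
    lowerOfCoords_apply_congr fun q hq => h q (by rw [hq])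
  simp only [covKernelFactor, mul_apply, transpose_apply, hrow]

theorem measurable_covKernelFactor (j : Fin m) :
    Measurable fun w : (LowerEdge E → ℝ) × ℝ => covKernelFactor E U α j w.1 w.2 := by
  have hquad : Continuous fun x : LowerEdge E → ℝ =>
      (lowerOfCoords E x * U * (lowerOfCoords E x)ᵀ) j j :=
    (continuous_apply j).comp ((continuous_apply j).comp
      ((continuous_lowerOfCoords.matrix_mul continuous_const).matrix_mul
        continuous_lowerOfCoords.matrix_transpose))
  refine Measurable.ite (measurableSet_lt measurable_const measurable_snd) ?_ measurable_const
  exact Real.measurable_exp.comp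
    (((measurable_snd.inv.mul (hquad.measurable.comp measurable_fst)).add
      ((Real.measurable_log.comp measurable_snd).const_mul _)).neg.div_const 2)

end Kernel

section Split

variable {m : ℕ} (E : Finset (Fin m × Fin m)) (i : Fin m)

/-- The vertex a coordinate of `Θ_G` belongs to: `L_{kl}` (for `(k, l) ∈ E^≺`) and `D_{kk}`
belong to `k`. -/
def coordVertex : LowerEdge E ⊕ Fin m → Fin m :=
  Sum.elim (fun q => q.1.1) id

noncomputable def splitEquiv :
    ({s // coordVertex E s < i} → ℝ) × ({s // ¬ coordVertex E s < i} → ℝ)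
      ≃ᵐ (LowerEdge E → ℝ) × (Fin m → ℝ) :=
  (MeasurableEquiv.piEquivPiSubtypeProd (fun _ => ℝ) fun s => coordVertex E s < i).symm.trans
    (MeasurableEquiv.sumPiEquivProdPi fun _ => ℝ)

theorem measurePreserving_splitEquiv : MeasurePreserving (splitEquiv E i) volume volume :=
  (volume_measurePreserving_sumPiEquivProdPi _).comp
    ((volume_preserving_piEquivPiSubtypeProd _ _).symm _)

variable {E i}

theorem splitEquiv_fst_apply (z) (q : LowerEdge E) :
    (splitEquiv E i z).1 q = if h : q.1.1 < i then z.1 ⟨.inl q, h⟩ else z.2 ⟨.inl q, h⟩ :=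
  rfl

theorem splitEquiv_snd_apply (z) (j : Fin m) :
    (splitEquiv E i z).2 j = if h : j < i then z.1 ⟨.inr j, h⟩ else z.2 ⟨.inr j, h⟩ :=
  rfl

end Split

section Factorization

variable {m : ℕ} {E : Finset (Fin m × Fin m)} (U : Matrix (Fin m) (Fin m) ℝ) (α : Fin m → ℝ)
  (hE : InvClosed E) (i : Fin m)

variable (E) in
noncomputable def splitInvEquiv :
    ({s // coordVertex E s < i} → ℝ) × ({s // ¬ coordVertex E s < i} → ℝ)
      ≃ᵐ (LowerEdge E → ℝ) × (Fin m → ℝ) :=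
  (splitEquiv E i).trans ((invCoordsEquiv E hE).prodCongr (MeasurableEquiv.refl _))

theorem splitInvEquiv_apply (z) :
    splitInvEquiv E hE i z = (invCoords E (splitEquiv E i z).1, (splitEquiv E i z).2) :=
  rfl

theorem measurePreserving_splitInvEquiv :
    MeasurePreserving (splitInvEquiv E hE i) volume volume :=
  (measurePreserving_invCoords.prod (MeasurePreserving.id volume)).comp
    (measurePreserving_splitEquiv E i)

variable (E) in
noncomputable def vertexWeight (j : Fin m) (ω : (LowerEdge E → ℝ) × (Fin m → ℝ)) : ℝ≥0∞ :=
  ENNReal.ofReal (covKernelFactor E U α j ω.1 (ω.2 j))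

theorem measurable_vertexWeight (j : Fin m) : Measurable (vertexWeight E U α j) :=
  ((measurable_covKernelFactor U α j).comp
    (measurable_fst.prodMk measurable_snd.eval)).ennreal_ofReal

variable (E) in
noncomputable def lowerWeight (x : {s // coordVertex E s < i} → ℝ) : ℝ≥0∞ :=
  ∏ j : {j // j < i}, vertexWeight E U α j (splitEquiv E i (x, 0))

variable (E) in
noncomputable def upperWeight (y : {s // ¬ coordVertex E s < i} → ℝ) : ℝ≥0∞ :=
  ∏ j : {j // ¬ j < i}, vertexWeight E U α j (splitEquiv E i (0, y))

theorem measurable_lowerWeight : Measurable (lowerWeight E U α i) :=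
  Finset.measurable_prod _ fun j _ => (measurable_vertexWeight U α j).comp
    ((splitEquiv E i).measurable.comp (measurable_id.prodMk measurable_const))

theorem measurable_upperWeight : Measurable (upperWeight E U α i) :=
  Finset.measurable_prod _ fun j _ => (measurable_vertexWeight U α j).comp
    ((splitEquiv E i).measurable.comp (measurable_const.prodMk measurable_id))

theorem ofReal_covKernel_splitInvEquiv (z) :
    ENNReal.ofReal (covKernel E U α (splitInvEquiv E hE i z))
      = lowerWeight E U α i z.1 * upperWeight E U α i z.2 := by
  obtain ⟨x, y⟩ := z
  rw [splitInvEquiv_apply, covKernel_invCoords U α hE,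
    ENNReal.ofReal_prod_of_nonneg fun j _ => covKernelFactor_nonneg U α j _ _,
    ← Fintype.prod_subtype_mul_prod_subtype fun j => j < i]
  congr 1 <;> refine Finset.prod_congr rfl fun j _ => congrArg ENNReal.ofReal ?_
  · rw [splitEquiv_snd_apply, splitEquiv_snd_apply, dif_pos j.2, dif_pos j.2]
    refine covKernelFactor_congr U α (fun q hq => ?_) _
    have hq' : q.1.1 < i := hq ▸ j.2
    rw [splitEquiv_fst_apply, splitEquiv_fst_apply, dif_pos hq', dif_pos hq']
  · rw [splitEquiv_snd_apply, splitEquiv_snd_apply, dif_neg j.2, dif_neg j.2]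
    refine covKernelFactor_congr U α (fun q hq => ?_) _
    have hq' : ¬ q.1.1 < i := hq ▸ j.2
    rw [splitEquiv_fst_apply, splitEquiv_fst_apply, dif_neg hq', dif_neg hq']

theorem splitInvEquiv_snd_apply_self (z) :
    (splitInvEquiv E hE i z).2 i = z.2 ⟨.inr i, lt_irrefl i⟩ :=
  dif_neg (lt_irrefl i)

theorem leadingBlock_splitInvEquiv (x) (y) (k l : {k : Fin m // k < i}) :
    (lowerOfCoords E (splitInvEquiv E hE i (x, y)).1 * diagonal (splitInvEquiv E hE i (x, y)).2
        * (lowerOfCoords E (splitInvEquiv E hE i (x, y)).1)ᵀ) k l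
      = (lowerOfCoords E (splitInvEquiv E hE i (x, 0)).1 * diagonal (splitInvEquiv E hE i (x, 0)).2
        * (lowerOfCoords E (splitInvEquiv E hE i (x, 0)).1)ᵀ) k l := by
  have hrows : ∀ a < i, ∀ c, (lowerOfCoords E (splitEquiv E i (x, y)).1)⁻¹ a c
      = (lowerOfCoords E (splitEquiv E i (x, 0)).1)⁻¹ a c := fun a ha =>
    inv_lowerOfCoords_apply_congr fun q hq => by
      rw [splitEquiv_fst_apply, splitEquiv_fst_apply, dif_pos (hq.trans_lt ha),
        dif_pos (hq.trans_lt ha)]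
  simp only [splitInvEquiv_apply, lowerOfCoords_invCoords hE]
  rw [mul_apply, mul_apply]
  simp only [mul_diagonal, transpose_apply, hrows k k.2, hrows l l.2]
  refine Finset.sum_congr rfl fun c _ => ?_
  by_cases hc : c < i
  · rw [splitEquiv_snd_apply, splitEquiv_snd_apply, dif_pos hc, dif_pos hc]
  · simp only [(lowerOfCoords_isLowerTriangular _).inv (lowerOfCoords_apply_self _)
      (show OrderDual.toDual c < OrderDual.toDual (k : Fin m) from k.2.trans_le (not_lt.mp hc)),
      zero_mul]

theorem continuous_leadingBlock : Continuous fun ω : (LowerEdge E → ℝ) × (Fin m → ℝ) =>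
    fun k l : {k : Fin m // k < i} =>
      (lowerOfCoords E ω.1 * diagonal ω.2 * (lowerOfCoords E ω.1)ᵀ) k l := by
  have hL : Continuous fun ω : (LowerEdge E → ℝ) × (Fin m → ℝ) => lowerOfCoords E ω.1 :=
    continuous_lowerOfCoords.comp continuous_fst
  have hLDL := (hL.matrix_mul continuous_snd.matrix_diagonal).matrix_mul hL.matrix_transpose
  exact continuous_pi fun k => continuous_pi fun l =>
    (continuous_apply (l : Fin m)).comp ((continuous_apply (k : Fin m)).comp hLDL)

end Factorization

theorem stmt_16_general {m : ℕ} (E : Finset (Fin m × Fin m))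
    (hclosed : ∀ L : Matrix (Fin m) (Fin m) ℝ,
      (∀ i j : Fin m, i < j → L i j = 0) →
      (∀ i : Fin m, L i i = 1) →
      (∀ i j : Fin m, j < i → (i, j) ∉ E → L i j = 0) →
      (∀ i j : Fin m, j < i → (i, j) ∉ E → L⁻¹ i j = 0))
    (U : Matrix (Fin m) (Fin m) ℝ)
    (α : Fin m → ℝ)
    (i : Fin m) :
    ProbabilityTheory.IndepFun
      (fun p : ({q : Fin m × Fin m // q ∈ E ∧ q.2 < q.1} → ℝ) × (Fin m → ℝ) => p.2 i)
      (fun p : ({q : Fin m × Fin m // q ∈ E ∧ q.2 < q.1} → ℝ) × (Fin m → ℝ) =>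
        fun k l : {k : Fin m // k < i} =>
          (lowerOfCoords E p.1 * Matrix.diagonal p.2 * (lowerOfCoords E p.1)ᵀ)
            (k : Fin m) (l : Fin m))
      (covPrior E U α) := by
  have hΦ := measurePreserving_splitInvEquiv hclosed i
  rw [covPrior_eq_smul]
  exact (indepFun_withDensity_of_measurePreserving_prod _ hΦ
    (measurable_lowerWeight U α i) (measurable_upperWeight U α i)
    (ofReal_covKernel_splitInvEquiv U α hclosed i)
    ((continuous_leadingBlock i).measurable.comp
      (hΦ.measurable.comp (measurable_id.prodMk measurable_const)))
    (measurable_pi_apply _) (fun z => funext₂ (leadingBlock_splitInvEquiv hclosed i z.1 z.2))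
    (splitInvEquiv_snd_apply_self hclosed i)).symm

/-- suppose `𝓛_G` is closed under matrix inversion, `U` is symmetric positive
definite and `α_i > |N^≺(i)| + 2` for all `i`. Under `P_{U,α}`, for every `i` the random
variables `D_{ii}` and `((LDLᵀ)_{kl})_{k,l < i}` are independent. -/
theorem stmt_16 {m : ℕ} (hm : 0 < m) (E : Finset (Fin m × Fin m))
    (hsymm : ∀ i j : Fin m, (i, j) ∈ E → (j, i) ∈ E)
    (hirr : ∀ i : Fin m, (i, i) ∉ E)
    (hclosed : ∀ L : Matrix (Fin m) (Fin m) ℝ,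
      (∀ i j : Fin m, i < j → L i j = 0) →
      (∀ i : Fin m, L i i = 1) →
      (∀ i j : Fin m, j < i → (i, j) ∉ E → L i j = 0) →
      (∀ i j : Fin m, j < i → (i, j) ∉ E → L⁻¹ i j = 0))
    (U : Matrix (Fin m) (Fin m) ℝ) (hU : U.PosDef)
    (α : Fin m → ℝ)
    (hα : ∀ i : Fin m,
      ((Finset.univ.filter (fun j : Fin m => (i, j) ∈ E ∧ j < i)).card : ℝ) + 2 < α i)
    (i : Fin m) :
    ProbabilityTheory.IndepFun
      (fun p : ({q : Fin m × Fin m // q ∈ E ∧ q.2 < q.1} → ℝ) × (Fin m → ℝ) => p.2 i)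
      (fun p : ({q : Fin m × Fin m // q ∈ E ∧ q.2 < q.1} → ℝ) × (Fin m → ℝ) =>
        fun k l : {k : Fin m // k < i} =>
          (lowerOfCoords E p.1 * Matrix.diagonal p.2 * (lowerOfCoords E p.1)ᵀ)
            (k : Fin m) (l : Fin m))
      (covPrior E U α) :=
  stmt_16_general E hclosed U α i
end
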